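/- arXiv:2112.02919 — 3 statements merged into one kernel-verified Lean document; each statement's English description precedes it below -/
import Mathlib

section
/- Let h ∈ (0, π - δ] with δ ∈ (0, π/2), and suppose μ₁ ≥ μ₂ ≥ ⋯ ≥ μₙ are real numbers with ∑ᵢ arccot(μᵢ) = h, where arccot takes values in (0,π). Then μ₁ ≥ ⋯ ≥ μ_{n-1} > 0 (assuming n ≥ 2). -/
/-- `arccot : ℝ → (0, π)`, the inverse of `cot` restricted to `(0, π)`. -/
noncomputable def arccot (x : ℝ) : ℝ := Real.pi / 2 - Real.arctan x

/-- If `h ∈ (0, π - δ]` with `δ ∈ (0, π/2)` and `μ₁ ≥ ⋯ ≥ μₙ` satisfy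
`∑ arccot μᵢ = h`, then `μ₁ ≥ ⋯ ≥ μ_{n-1} > 0`. -/
theorem dHYM_first_eigenvalues_pos {n : ℕ} (hn : 2 ≤ n) (δ h : ℝ)
    (hδ1 : 0 < δ) (hδ2 : δ < Real.pi / 2)
    (hh1 : 0 < h) (hh2 : h ≤ Real.pi - δ)
    (μ : Fin n → ℝ) (hmono : ∀ i j : Fin n, i ≤ j → μ j ≤ μ i)
    (heq : ∑ i, arccot (μ i) = h) :
    ∀ i : Fin n, (i : ℕ) < n - 1 → 0 < μ i := by
  intro i hi
  by_contra hle
  push_neg at hle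
  have hpos : ∀ k : Fin n, 0 < arccot (μ k) := fun k => by
    have := Real.arctan_lt_pi_div_two (μ k)
    unfold arccot; linarith
  have hj : n - 1 < n := Nat.sub_lt (by omega) one_pos
  set j : Fin n := ⟨n - 1, hj⟩ with hjdef
  have hij : i ≠ j := by
    intro h'
    rw [h'] at hi
    exact lt_irrefl _ hi
  have hμj : μ j ≤ 0 := le_trans (hmono i j (by simp [Fin.le_def, hjdef]; omega)) hle
  have h1 : Real.pi / 2 ≤ arccot (μ i) := by
    have : Real.arctan (μ i) ≤ 0 := by
      simpa using Real.arctan_strictMono.monotone hle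
    unfold arccot; linarith
  have h2 : Real.pi / 2 ≤ arccot (μ j) := by
    have : Real.arctan (μ j) ≤ 0 := by
      simpa using Real.arctan_strictMono.monotone hμj
    unfold arccot; linarith
  have hsub : ({i, j} : Finset (Fin n)) ⊆ Finset.univ := Finset.subset_univ _
  have hsum : ∑ k ∈ ({i, j} : Finset (Fin n)), arccot (μ k) ≤ ∑ k, arccot (μ k) :=
    Finset.sum_le_sum_of_subset_of_nonneg hsub (fun k _ _ => (hpos k).le)
  rw [Finset.sum_pair hij] at hsum
  rw [heq] at hsum
  linarith
end

section
/- Let h ∈ (0, π - δ] with δ ∈ (0, π/2), and suppose μ₁ ≥ ⋯ ≥ μₙ with ∑ᵢ arccot(μᵢ) = h. Then |μₙ| ≤ μ_{n-1} (for n ≥ 2). -/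
lemma arccot_pos (x : ℝ) : 0 < arccot x := by
  have := Real.arctan_lt_pi_div_two x
  unfold arccot; linarith

lemma arccot_neg_eq (x : ℝ) : arccot (-x) = Real.pi - arccot x := by
  unfold arccot; rw [Real.arctan_neg]; ring

lemma arccot_lt_arccot {x y : ℝ} (h : x < y) : arccot y < arccot x := by
  unfold arccot
  have := Real.arctan_strictMono h
  linarith

/-- If `h ∈ (0, π - δ]` with `δ ∈ (0, π/2)` and `μ₁ ≥ ⋯ ≥ μₙ` satisfy
`∑ arccot μᵢ = h`, then `|μₙ| ≤ μ_{n-1}`. -/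
theorem dHYM_abs_last_le {n : ℕ} (hn : 2 ≤ n) (δ h : ℝ)
    (hδ1 : 0 < δ) (hδ2 : δ < Real.pi / 2)
    (hh1 : 0 < h) (hh2 : h ≤ Real.pi - δ)
    (μ : Fin n → ℝ) (hmono : ∀ i j : Fin n, i ≤ j → μ j ≤ μ i)
    (heq : ∑ i, arccot (μ i) = h) :
    |μ ⟨n - 1, by omega⟩| ≤ μ ⟨n - 2, by omega⟩ := by
  set a : Fin n := ⟨n - 1, by omega⟩
  set b : Fin n := ⟨n - 2, by omega⟩
  have hab : b ≠ a := by
    simp only [a, b, Fin.ne_iff_vne]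
    omega
  have hba : b ≤ a := by
    simp only [a, b, Fin.le_iff_val_le_val]
    omega
  have hle : μ a ≤ μ b := hmono b a hba
  have hsum : arccot (μ b) + arccot (μ a) ≤ h := by
    rw [← heq]
    have : ∑ i ∈ ({b, a} : Finset (Fin n)), arccot (μ i) ≤ ∑ i, arccot (μ i) :=
      Finset.sum_le_sum_of_subset_of_nonneg (Finset.subset_univ _)
        (fun i _ _ => (arccot_pos (μ i)).le)
    rwa [Finset.sum_pair hab] at this
  have hpi : arccot (μ a) < Real.pi - arccot (μ b) := by linarith
  have : arccot (μ a) < arccot (-(μ b)) := by rw [arccot_neg_eq]; exact hpi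
  have hneg : -(μ b) < μ a := by
    by_contra hc
    push_neg at hc
    rcases eq_or_lt_of_le hc with heq' | hlt
    · rw [heq'] at this; exact lt_irrefl _ this
    · exact absurd (arccot_lt_arccot hlt) (not_lt.mpr this.le)
  exact abs_le.mpr ⟨hneg.le, hle⟩
end

section
/- Let Γ = {μ ∈ ℝⁿ : 0 < ∑ᵢ arccot(μᵢ) < π} and for σ ∈ ℝ let Γ^σ = {μ ∈ ℝⁿ : 0 < ∑ᵢ arccot(μᵢ) < arccot(σ)}. For any σ < σ', there exists N > 0 depending only on σ, σ' (and n) such that Γ^σ + N·(1,…,1) ⊂ Γ^{σ'}. -/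
/-- For any `σ < σ'` there is `N > 0` (depending only on `σ, σ', n`) such that
`Γ^σ + N·𝟏 ⊂ Γ^{σ'}` for the dHYM level sets
`Γ^σ = {μ : 0 < ∑ arccot μᵢ < arccot σ}`. -/
theorem dHYM_level_set_translation (n : ℕ) (σ σ' : ℝ) (hσ : σ < σ') :
    ∃ N : ℝ, 0 < N ∧ ∀ μ : Fin n → ℝ,
      (0 < ∑ i, arccot (μ i) ∧ ∑ i, arccot (μ i) < arccot σ) →
      (0 < ∑ i, arccot (μ i + N) ∧ ∑ i, arccot (μ i + N) < arccot σ') := by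
  have pi_pos := Real.pi_pos
  have arccot_pos : ∀ x : ℝ, 0 < arccot x := fun x => by
    have := Real.arctan_lt_pi_div_two x
    unfold arccot; linarith
  set c := arccot σ' with hc
  have hc0 : 0 < c := arccot_pos σ'
  set ε : ℝ := min (c / (n + 1)) (Real.pi / 4) with hε
  have hε0 : 0 < ε := lt_min (by positivity) (by positivity)
  have hεle : ε ≤ Real.pi / 4 := min_le_right _ _
  set T : ℝ := Real.tan (Real.pi / 2 - ε) with hT
  have hatT : Real.arctan T = Real.pi / 2 - ε := by
    apply Real.arctan_tan <;> linarith
  refine ⟨max 1 (T - σ + 1), lt_of_lt_of_le one_pos (le_max_left _ _), fun μ ⟨h1, h2⟩ => ?_⟩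
  set N : ℝ := max 1 (T - σ + 1) with hN
  have hNge : T - σ + 1 ≤ N := le_max_right _ _
  -- n ≥ 1
  have hn : 0 < n := by
    rcases Nat.eq_zero_or_pos n with h | h
    · subst h; simp at h1
    · exact h
  -- each μ i > σ
  have hμσ : ∀ i, σ < μ i := by
    intro i
    have hle : arccot (μ i) ≤ ∑ j, arccot (μ j) :=
      Finset.single_le_sum (fun j _ => (arccot_pos (μ j)).le) (Finset.mem_univ i)
    have hlt : arccot (μ i) < arccot σ := lt_of_le_of_lt hle h2
    have : Real.arctan σ < Real.arctan (μ i) := by unfold arccot at hlt; linarith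
    exact Real.arctan_strictMono.lt_iff_lt.mp this
  -- each arccot (μ i + N) < ε
  have hsmall : ∀ i, arccot (μ i + N) < ε := by
    intro i
    have hx : T < μ i + N := by have := hμσ i; linarith
    have : Real.arctan T < Real.arctan (μ i + N) := Real.arctan_strictMono hx
    unfold arccot; rw [hatT] at this; linarith
  constructor
  · exact Finset.sum_pos (fun i _ => arccot_pos _) (Finset.univ_nonempty_iff.mpr ⟨⟨0, hn⟩⟩)
  · have hsum : ∑ i, arccot (μ i + N) < ∑ _i : Fin n, ε :=
      Finset.sum_lt_sum_of_nonempty (Finset.univ_nonempty_iff.mpr ⟨⟨0, hn⟩⟩)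
        (fun i _ => hsmall i)
    have : (∑ _i : Fin n, ε) = n * ε := by simp [Finset.sum_const, mul_comm]
    rw [this] at hsum
    have h3 : (n : ℝ) * ε ≤ n * (c / (n + 1)) := by
      apply mul_le_mul_of_nonneg_left (min_le_left _ _) (by positivity)
    have h4 : (n : ℝ) * (c / (n + 1)) < c := by
      rw [mul_div_assoc']
      rw [div_lt_iff₀ (by positivity)]
      have h5 : (1:ℝ) ≤ (n:ℝ) := Nat.one_le_cast.mpr hn
      nlinarith
    calc ∑ i, arccot (μ i + N) < n * ε := hsum
      _ ≤ n * (c / (n + 1)) := h3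
      _ < c := h4
end
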